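/- Let p ∈ (1,2], m ∈ ℕ with m ≥ 1, and let D ≥ 0 be a constant such that for every N, n ∈ ℕ and every (m+1)-linear form A : ℝᴺ × ℝⁿ × ⋯ × ℝⁿ → ℝ (m copies of ℝⁿ) one has (∑_{i₂,…,i_{m+1}=1}^{n} (∑_{i₁=1}^{N} |A(e_{i₁},e_{i₂},…,e_{i_{m+1}})|^{p})^{2/p})^{1/2} ≤ D · sup{|A(x^{(1)},…,x^{(m+1)})| : ‖x^{(1)}‖_{ℓ_{p/(p−1)}} ≤ 1 and ‖x^{(k)}‖_{ℓ_∞} ≤ 1 for k = 2,…,m+1}. Then the multiple Khintchine inequality holds with constant D: for every n ∈ ℕ and every array of real scalars (y_{i₁…i_m})_{i₁,…,i_m=1}^{n}, (∑_{i₁,…,i_m=1}^{n} |y_{i₁…i_m}|²)^{1/2} ≤ D · (∫_{[0,1]^m} |∑_{i₁,…,i_m=1}^{n} r_{i₁}(t₁)···r_{i_m}(t_m) y_{i₁…i_m}|^{p} dt₁···dt_m)^{1/p}. -/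

import Mathlib

/-!
Fix `n` and cut `[0,1]^m` into the `2^{nm}` dyadic cubes `Q` of side `2⁻ⁿ`; on each of them every
`r_{iₖ+1}(tₖ)` with `iₖ < n` is a constant sign. Apply the hypothesis with `N = 2^{nm}` to the form
`A(x, z) = 2^{-nm/p} ∑_Q x_Q ∑ᵢ yᵢ ∏ₖ r_{iₖ+1}(Q) zₖ(iₖ)`. Since `|A(e_Q, eᵢ)|^p = 2^{-nm} |yᵢ|^p`,
the left-hand side of the hypothesis is exactly `‖y‖₂`. By Hölder in `x`, the norm of `A` is at
most the largest `ℓ_p` norm over `Q` of `A(·, z)` with `‖zₖ‖_∞ ≤ 1`; for `z = 1` this is the `L_p`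
norm of the Rademacher chaos. The sign patterns on the cubes run through all of `{±1}^{m × n}`, so
by the contraction principle (the sum of a separately convex function over all sign flips of a
point of `[-1,1]^J` is largest at the vertices) `z = 1` is the worst case.
-/

open MeasureTheory Real Filter

/-- The `j`-th Rademacher function, `r_j(t) = sgn(sin(2^j π t))`. -/
noncomputable def rademacher (j : ℕ) (t : ℝ) : ℝ :=
  Real.sign (Real.sin ((2 : ℝ) ^ j * Real.pi * t))

/-- `p₀ ∈ (1,2)` is the unique solution of `Γ((p₀+1)/2) = √π / 2`. -/
noncomputable def khintchineP0 : ℝ :=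
  sInf {p : ℝ | 1 < p ∧ p < 2 ∧ Real.Gamma ((p + 1) / 2) = Real.sqrt Real.pi / 2}

/-- The optimal constant `A_r` in the Khintchine inequality. -/
noncomputable def khintchineA (r : ℝ) : ℝ :=
  if r ≤ khintchineP0 then (2 : ℝ) ^ (1 / r - 1 / 2)
  else if r < 2 then
    (1 / Real.sqrt 2) * (Real.Gamma ((r + 1) / 2) / Real.sqrt Real.pi) ^ (-(1 / r))
  else 1

/-- The `ℓ_p` norm of a vector in `ℝⁿ` (for finite `p`). -/
noncomputable def lpNorm (p : ℝ) {n : ℕ} (x : Fin n → ℝ) : ℝ :=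
  (∑ i, |x i| ^ p) ^ (1 / p)

/-- The `ℓ_∞` norm of a vector in `ℝⁿ`. -/
noncomputable def linfNorm {n : ℕ} (x : Fin n → ℝ) : ℝ :=
  ⨆ i, |x i|

/-- The norm of an `(m+1)`-linear form on `ℝᴺ × (ℝⁿ)^m` (encoded as a linear map into
`m`-multilinear maps): `sup{|T(x, y₁, …, y_m)| : ‖x‖_{ℓ_p} ≤ 1, ‖y_k‖_{ℓ_∞} ≤ 1}`. -/
noncomputable def multiOpNorm (p : ℝ) {N n m : ℕ}
    (T : (Fin N → ℝ) →ₗ[ℝ] MultilinearMap ℝ (fun _ : Fin m => (Fin n → ℝ)) ℝ) : ℝ :=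
  sSup {c : ℝ | ∃ (x : Fin N → ℝ) (y : Fin m → (Fin n → ℝ)),
    lpNorm p x ≤ 1 ∧ (∀ k, linfNorm (y k) ≤ 1) ∧ c = |T x y|}

open Function

section SignSymmetrization

theorem ConvexOn.fun_sum {𝕜 E β ι : Type*} [Semiring 𝕜] [PartialOrder 𝕜] [AddCommMonoid E]
    [AddCommMonoid β] [PartialOrder β] [IsOrderedAddMonoid β] [SMul 𝕜 E] [Module 𝕜 β]
    {s : Set E} (hs : Convex 𝕜 s) (t : Finset ι) {f : ι → E → β}
    (hf : ∀ i ∈ t, ConvexOn 𝕜 s (f i)) : ConvexOn 𝕜 s fun x => ∑ i ∈ t, f i x := by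
  classical
  induction t using Finset.induction_on with
  | empty => simpa using convexOn_const (0 : β) hs
  | insert i t hi ih =>
    simp_rw [Finset.sum_insert hi]
    exact (hf i (t.mem_insert_self i)).add (ih fun j hj => hf j (Finset.mem_insert_of_mem hj))

theorem ConvexOn.le_of_abs_le_one {g : ℝ → ℝ} (hg : ConvexOn ℝ Set.univ g) (heven : g (-1) = g 1)
    {w : ℝ} (hw : |w| ≤ 1) : g w ≤ g 1 := by
  have hseg : w ∈ segment ℝ (-1 : ℝ) 1 := by
    rw [segment_eq_Icc (by norm_num)]
    exact abs_le.1 hw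
  simpa [heven] using hg.le_on_segment (Set.mem_univ _) (Set.mem_univ _) hseg

theorem convexOn_abs_rpow {p : ℝ} (hp : 1 ≤ p) : ConvexOn ℝ Set.univ fun u : ℝ => |u| ^ p := by
  refine ⟨convex_univ, fun x _ y _ a b ha hb hab => ?_⟩
  have htri : |a • x + b • y| ≤ a * |x| + b * |y| := by
    simpa [abs_mul, abs_of_nonneg ha, abs_of_nonneg hb] using abs_add_le (a * x) (b * y)
  calc |a • x + b • y| ^ p ≤ (a * |x| + b * |y|) ^ p :=
        Real.rpow_le_rpow (abs_nonneg _) htri (by linarith)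
    _ ≤ a • |x| ^ p + b • |y| ^ p :=
        (convexOn_rpow hp).2 (abs_nonneg x) (abs_nonneg y) ha hb hab

theorem neg_one_pow_val_add_one {R : Type*} [Ring R] (a : Fin 2) :
    (-1 : R) ^ ((a + 1 : Fin 2) : ℕ) = -(-1) ^ (a : ℕ) := by
  fin_cases a <;> simp

variable {J : Type*} [Fintype J] [DecidableEq J]

/-- Negating one coordinate of `z` permutes the sign-flipped copies of `z`. -/
theorem sum_signs_mul_update_neg (ψ : (J → ℝ) → ℝ) (z : J → ℝ) (j : J) :
    ∑ ε : J → Fin 2, ψ (fun j' => (-1) ^ (ε j' : ℕ) * update z j (-z j) j')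
      = ∑ ε : J → Fin 2, ψ (fun j' => (-1) ^ (ε j' : ℕ) * z j') := by
  refine Fintype.sum_equiv (Equiv.addRight (Pi.single j 1)) _ _ fun ε => congrArg ψ ?_
  ext j'
  rcases eq_or_ne j' j with rfl | hj'
  · simp [neg_one_pow_val_add_one]
  · simp [hj']

theorem sum_signs_mul_le_sum_signs {ψ : (J → ℝ) → ℝ}
    (hψ : ∀ v j, ConvexOn ℝ Set.univ fun w => ψ (update v j w)) {z : J → ℝ}
    (hz : ∀ j, |z j| ≤ 1) :
    ∑ ε : J → Fin 2, ψ (fun j => (-1) ^ (ε j : ℕ) * z j)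
      ≤ ∑ ε : J → Fin 2, ψ (fun j => (-1) ^ (ε j : ℕ)) := by
  set S : (J → ℝ) → ℝ := fun z => ∑ ε : J → Fin 2, ψ (fun j => (-1) ^ (ε j : ℕ) * z j)
  suffices key : ∀ s : Finset J, ∀ z : J → ℝ, (∀ j, |z j| ≤ 1) → (∀ j ∉ s, z j = 1) →
      S z ≤ S 1 by
    simpa [S] using key Finset.univ z hz (by simp)
  intro s
  induction s using Finset.induction_on with
  | empty =>
    intro z _ hz1
    rw [show z = 1 from funext fun j => hz1 j (Finset.notMem_empty j)]
  | insert j s _ ih =>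
    intro z hz hz1
    set g : ℝ → ℝ := fun w => S (update z j w)
    have hconv : ConvexOn ℝ Set.univ g := by
      refine ConvexOn.fun_sum convex_univ _ fun ε _ => ?_
      have hline := (hψ (fun j' => (-1) ^ (ε j' : ℕ) * z j') j).comp_linearMap
        (LinearMap.mulLeft ℝ ((-1 : ℝ) ^ (ε j : ℕ)))
      refine hline.congr fun w _ => congrArg ψ ?_
      ext j'
      rcases eq_or_ne j' j with rfl | hj' <;> simp [*]
    have heven : g (-1) = g 1 := by
      simpa [g, S] using sum_signs_mul_update_neg ψ (update z j 1) j
    calc S z = g (z j) := by simp [g]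
      _ ≤ g 1 := hconv.le_of_abs_le_one heven (hz j)
      _ ≤ S 1 := by
        refine ih _ (fun j' => ?_) (fun j' hj' => ?_)
        · rcases eq_or_ne j' j with rfl | hj' <;> simp [*]
        · rcases eq_or_ne j' j with rfl | hne
          · simp
          · simpa [hne] using hz1 j' (by simp [hne, hj'])

end SignSymmetrization

section Multilinear

variable {ι κ : Type*}

theorem update_eq_lineMap [DecidableEq κ] (x : κ → ℝ) (i : κ) (w : ℝ) :
    update x i w = AffineMap.lineMap (update x i 0) (update x i 1) w := by
  ext i'
  rcases eq_or_ne i' i with rfl | hi <;> simp [AffineMap.lineMap_apply, *]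

theorem MultilinearMap.convexOn_abs_rpow_update [DecidableEq ι] [DecidableEq κ]
    (f : MultilinearMap ℝ (fun _ : ι => κ → ℝ) ℝ) {p : ℝ} (hp : 1 ≤ p) (z : ι → κ → ℝ)
    (k : ι) (i : κ) : ConvexOn ℝ Set.univ fun w => |f (update z k (update (z k) i w))| ^ p := by
  have h := ((convexOn_abs_rpow hp).comp_linearMap (f.toLinearMap z k)).comp_affineMap
    (AffineMap.lineMap (update (z k) i 0) (update (z k) i 1))
  refine h.congr fun w _ => ?_
  simp [update_eq_lineMap (z k) i w]

theorem MultilinearMap.sum_signs_abs_rpow_le [Fintype ι] [DecidableEq ι] [Fintype κ]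
    [DecidableEq κ] (f : MultilinearMap ℝ (fun _ : ι => κ → ℝ) ℝ) {p : ℝ} (hp : 1 ≤ p)
    {z : ι → κ → ℝ} (hz : ∀ k i, |z k i| ≤ 1) :
    ∑ ε : ι × κ → Fin 2, |f fun k i => (-1) ^ (ε (k, i) : ℕ) * z k i| ^ p
      ≤ ∑ ε : ι × κ → Fin 2, |f fun k i => (-1) ^ (ε (k, i) : ℕ)| ^ p := by
  refine sum_signs_mul_le_sum_signs (ψ := fun v => |f (curry v)| ^ p) (z := uncurry z)
    (fun v j => ?_) fun j => hz j.1 j.2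
  simpa only [curry_update] using f.convexOn_abs_rpow_update hp (curry v) j.1 j.2

variable [Fintype ι] [DecidableEq ι] [Fintype κ]

noncomputable def chaosForm (y : (ι → κ) → ℝ) : MultilinearMap ℝ (fun _ : ι => κ → ℝ) ℝ :=
  ∑ i, y i • (MultilinearMap.mkPiAlgebra ℝ ι ℝ).compLinearMap fun k => LinearMap.proj (i k)

theorem chaosForm_apply (y : (ι → κ) → ℝ) (z : ι → κ → ℝ) :
    chaosForm y z = ∑ i, y i * ∏ k, z k (i k) := by
  simp [chaosForm]

theorem chaosForm_apply_mul_single [DecidableEq κ] (y : (ι → κ) → ℝ)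
    (s : ι → κ → ℝ) (i : ι → κ) :
    chaosForm y (fun k => s k * Pi.single (i k) 1) = (∏ k, s k (i k)) * y i := by
  have hsingle : (fun k => s k * Pi.single (i k) 1) = fun k => s k (i k) • Pi.single (i k) 1 := by
    ext k i'
    rcases eq_or_ne i' (i k) with rfl | hi <;> simp [*]
  rw [hsingle, MultilinearMap.map_smul_univ, chaosForm_apply, smul_eq_mul]
  congr 1
  refine (Finset.sum_eq_single i (fun i' _ hi' => ?_) (by simp)).trans (by simp)
  obtain ⟨k, hk⟩ := Function.ne_iff.1 hi'
  exact mul_eq_zero_of_right _ (Finset.prod_eq_zero (Finset.mem_univ k) (by simp [hk]))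

end Multilinear

section Dyadic

/-- The value of `r_{i+1}` on `(ℓ / 2ⁿ, (ℓ + 1) / 2ⁿ)`: `(-1)` to the `(i+1)`-st binary digit of
`ℓ / 2ⁿ`. `finFunctionFinEquiv` lists the digits of `ℓ` from the least significant one, hence
`i.rev`. -/
noncomputable def dyadicSign {n : ℕ} (ℓ : Fin (2 ^ n)) (i : Fin n) : ℝ :=
  (-1) ^ (finFunctionFinEquiv.symm ℓ i.rev : ℕ)

theorem rademacher_eq_neg_one_pow_of_mem_Ioo (i j : ℕ) {t : ℝ}
    (ht : t ∈ Set.Ioo ((j : ℝ) / 2 ^ (i + 1)) ((j + 1) / 2 ^ (i + 1))) :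
    rademacher (i + 1) t = (-1) ^ j := by
  have h2 : (0 : ℝ) < 2 ^ (i + 1) := by positivity
  obtain ⟨hlo, hhi⟩ := ht
  rw [div_lt_iff₀ h2] at hlo
  rw [lt_div_iff₀ h2] at hhi
  have hpos : 0 < Real.sin (π * (2 ^ (i + 1) * t - j)) :=
    Real.sin_pos_of_pos_of_lt_pi (by nlinarith [Real.pi_pos]) (by nlinarith [Real.pi_pos])
  have hsin : Real.sin ((2 : ℝ) ^ (i + 1) * π * t)
      = (-1) ^ j * Real.sin (π * (2 ^ (i + 1) * t - j)) := by
    rw [← Real.sin_add_nat_mul_pi]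
    ring_nf
  rw [rademacher, hsin]
  rcases Nat.even_or_odd j with hj | hj
  · rw [hj.neg_one_pow, one_mul, Real.sign_of_pos hpos]
  · rw [hj.neg_one_pow, neg_one_mul, Real.sign_of_neg (neg_neg_iff_pos.2 hpos)]

theorem Ioo_dyadic_subset (ℓ a b : ℕ) :
    Set.Ioo ((ℓ : ℝ) / 2 ^ (a + b)) ((ℓ + 1) / 2 ^ (a + b))
      ⊆ Set.Ioo (((ℓ / 2 ^ b : ℕ) : ℝ) / 2 ^ a) (((ℓ / 2 ^ b : ℕ) + 1) / 2 ^ a) := by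
  have hlo : ((ℓ / 2 ^ b * 2 ^ b : ℕ) : ℝ) ≤ ℓ := by exact_mod_cast Nat.div_mul_le_self ℓ (2 ^ b)
  have hhi : (ℓ : ℝ) + 1 ≤ ((ℓ / 2 ^ b + 1) * 2 ^ b : ℕ) := by
    have := Nat.lt_div_mul_add (a := ℓ) (Nat.two_pow_pos b)
    exact_mod_cast (by rw [add_mul, one_mul]; omega : ℓ + 1 ≤ (ℓ / 2 ^ b + 1) * 2 ^ b)
  push_cast at hlo hhi
  rw [pow_add]
  refine Set.Ioo_subset_Ioo ?_ ?_
  · rw [div_le_div_iff₀ (by positivity) (by positivity)]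
    nlinarith [pow_pos (two_pos : (0 : ℝ) < 2) a]
  · rw [div_le_div_iff₀ (by positivity) (by positivity)]
    nlinarith [pow_pos (two_pos : (0 : ℝ) < 2) a]

theorem rademacher_eq_dyadicSign {n : ℕ} (ℓ : Fin (2 ^ n)) (i : Fin n) {t : ℝ}
    (ht : t ∈ Set.Ioo ((ℓ : ℝ) / 2 ^ n) ((ℓ + 1) / 2 ^ n)) :
    rademacher (i + 1) t = dyadicSign ℓ i := by
  have hn : (2 : ℝ) ^ n = 2 ^ ((i + 1 : ℕ) + i.rev) := by
    rw [Fin.val_rev]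
    congr 1
    omega
  rw [hn] at ht
  rw [dyadicSign, finFunctionFinEquiv_symm_apply_val, ← neg_one_pow_eq_pow_mod_two]
  exact rademacher_eq_neg_one_pow_of_mem_Ioo i _ (Ioo_dyadic_subset ℓ _ _ ht)

variable {ι : Type*}

def dyadicCube (n : ℕ) (Q : ι → Fin (2 ^ n)) : Set (ι → ℝ) :=
  Set.univ.pi fun k => Set.Ioo ((Q k : ℝ) / 2 ^ n) ((Q k + 1) / 2 ^ n)

theorem measurableSet_dyadicCube [Fintype ι] (n : ℕ) (Q : ι → Fin (2 ^ n)) :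
    MeasurableSet (dyadicCube n Q) :=
  MeasurableSet.univ_pi fun _ => measurableSet_Ioo

theorem volume_dyadicCube [Fintype ι] (n : ℕ) (Q : ι → Fin (2 ^ n)) :
    volume (dyadicCube n Q) = ENNReal.ofReal (((2 : ℝ) ^ n)⁻¹ ^ Fintype.card ι) := by
  have hlength : ∀ a : ℝ, (a + 1) / 2 ^ n - a / 2 ^ n = ((2 : ℝ) ^ n)⁻¹ := fun a => by ring
  simp_rw [dyadicCube, volume_pi_pi, Real.volume_Ioo, hlength]
  rw [Finset.prod_const, Finset.card_univ, ← ENNReal.ofReal_pow (by positivity)]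

theorem dyadicCube_subset_Icc (n : ℕ) (Q : ι → Fin (2 ^ n)) :
    dyadicCube n Q ⊆ Set.Icc 0 1 := by
  rw [← Set.pi_univ_Icc]
  refine Set.pi_mono fun k _ => ?_
  simp only [Pi.zero_apply, Pi.one_apply]
  refine Set.Ioo_subset_Icc_self.trans (Set.Icc_subset_Icc (by positivity) ?_)
  rw [div_le_one (by positivity)]
  exact_mod_cast (Q k).isLt

theorem pairwise_disjoint_dyadicCube (n : ℕ) :
    Pairwise (Disjoint on dyadicCube (ι := ι) n) := by
  intro Q Q' hne
  obtain ⟨k, hk⟩ := Function.ne_iff.1 hne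
  refine Set.disjoint_left.2 fun t htQ htQ' => ?_
  obtain ⟨hlo, hhi⟩ := htQ k (Set.mem_univ k)
  obtain ⟨hlo', hhi'⟩ := htQ' k (Set.mem_univ k)
  have h2 : (0 : ℝ) < 2 ^ n := by positivity
  rw [div_lt_iff₀ h2] at hlo hlo'
  rw [lt_div_iff₀ h2] at hhi hhi'
  rcases Fin.lt_or_lt_of_ne hk with hlt | hlt
  · have : (Q k : ℝ) + 1 ≤ Q' k := by exact_mod_cast hlt
    linarith
  · have : (Q' k : ℝ) + 1 ≤ Q k := by exact_mod_cast hlt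
    linarith

theorem iUnion_dyadicCube_ae_eq_Icc [Fintype ι] [DecidableEq ι] (n : ℕ) :
    (⋃ Q : ι → Fin (2 ^ n), dyadicCube n Q) =ᵐ[volume] Set.Icc (0 : ι → ℝ) 1 := by
  have hIcc : volume (Set.Icc (0 : ι → ℝ) 1) = 1 := by simp [Real.volume_Icc_pi]
  refine ae_eq_of_subset_of_measure_ge (Set.iUnion_subset (dyadicCube_subset_Icc n))
    (le_of_eq ?_) (MeasurableSet.iUnion (measurableSet_dyadicCube n)).nullMeasurableSet
    (by simp [hIcc])
  rw [hIcc, measure_iUnion (pairwise_disjoint_dyadicCube n) (measurableSet_dyadicCube n),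
    tsum_fintype]
  simp_rw [volume_dyadicCube]
  rw [Finset.sum_const, Finset.card_univ, Fintype.card_fun, Fintype.card_fin, nsmul_eq_mul,
    ← ENNReal.ofReal_natCast, ← ENNReal.ofReal_mul (by positivity)]
  push_cast
  rw [← mul_pow, mul_inv_cancel₀ (by positivity), one_pow, ENNReal.ofReal_one]

theorem setIntegral_Icc_eq_sum_dyadicCube [Fintype ι] [DecidableEq ι] {n : ℕ} {f : (ι → ℝ) → ℝ}
    {g : (ι → Fin (2 ^ n)) → ℝ}
    (hfg : ∀ Q, ∀ t ∈ dyadicCube n Q, f t = g Q) :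
    ∫ t in Set.Icc 0 1, f t = ((2 : ℝ) ^ n)⁻¹ ^ Fintype.card ι * ∑ Q, g Q := by
  have hconst : ∀ Q, ∫ t in dyadicCube n Q, f t = ((2 : ℝ) ^ n)⁻¹ ^ Fintype.card ι * g Q := by
    intro Q
    rw [setIntegral_congr_fun (measurableSet_dyadicCube n Q) (hfg Q), setIntegral_const,
      measureReal_def, volume_dyadicCube, ENNReal.toReal_ofReal (by positivity), smul_eq_mul]
  have hint : ∀ Q, IntegrableOn f (dyadicCube n Q) := fun Q =>
    (integrableOn_const (by simp [volume_dyadicCube])).congr_fun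
      (fun t ht => (hfg Q t ht).symm) (measurableSet_dyadicCube n Q)
  rw [← setIntegral_congr_set (iUnion_dyadicCube_ae_eq_Icc n),
    integral_iUnion_fintype (measurableSet_dyadicCube n) (pairwise_disjoint_dyadicCube n) hint,
    Finset.mul_sum]
  exact Finset.sum_congr rfl fun Q _ => hconst Q

def dyadicDigitsEquiv (ι : Type*) (n : ℕ) : (ι → Fin (2 ^ n)) ≃ (ι × Fin n → Fin 2) :=
  (Equiv.arrowCongr (.refl ι)
    (finFunctionFinEquiv.symm.trans (Equiv.arrowCongr Fin.revPerm (.refl _)))).trans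
    (Equiv.curry _ _ _).symm

theorem dyadicSign_eq_dyadicDigitsEquiv {n : ℕ} (Q : ι → Fin (2 ^ n)) (k : ι) (i : Fin n) :
    dyadicSign (Q k) i = (-1) ^ (dyadicDigitsEquiv ι n Q (k, i) : ℕ) := by
  simp [dyadicSign, dyadicDigitsEquiv]

theorem MultilinearMap.sum_dyadicSign_abs_rpow_le [Fintype ι] [DecidableEq ι] {n : ℕ}
    (f : MultilinearMap ℝ (fun _ : ι => Fin n → ℝ) ℝ) {p : ℝ} (hp : 1 ≤ p)
    {z : ι → Fin n → ℝ} (hz : ∀ k i, |z k i| ≤ 1) :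
    ∑ Q : ι → Fin (2 ^ n), |f fun k => dyadicSign (Q k) * z k| ^ p
      ≤ ∑ Q : ι → Fin (2 ^ n), |f fun k => dyadicSign (Q k)| ^ p := by
  have h := f.sum_signs_abs_rpow_le hp hz
  rw [← (dyadicDigitsEquiv ι n).sum_comp, ← (dyadicDigitsEquiv ι n).sum_comp] at h
  simp only [← dyadicSign_eq_dyadicDigitsEquiv] at h
  exact h

end Dyadic

section OperatorNorm

theorem abs_le_one_of_linfNorm_le_one {n : ℕ} {x : Fin n → ℝ} (hx : linfNorm x ≤ 1) (i : Fin n) :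
    |x i| ≤ 1 :=
  (le_ciSup (Set.finite_range _).bddAbove i).trans hx

/-- Hölder's inequality in the first variable. -/
theorem multiOpNorm_linearCombination_le {N n m : ℕ} {p : ℝ} (hp : 1 < p)
    (G : Fin N → MultilinearMap ℝ (fun _ : Fin m => Fin n → ℝ) ℝ) {B : ℝ} (hB0 : 0 ≤ B)
    (hB : ∀ z : Fin m → Fin n → ℝ, (∀ k i, |z k i| ≤ 1) → ∑ r, |G r z| ^ p ≤ B) :
    multiOpNorm (p / (p - 1)) (Fintype.linearCombination ℝ G) ≤ B ^ (1 / p) := by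
  refine Real.sSup_le ?_ (by positivity)
  rintro _ ⟨x, z, hx, hz, rfl⟩
  have hpq : (p / (p - 1)).HolderConjugate p := (Real.HolderConjugate.conjExponent hp).symm
  rw [Fintype.linearCombination_apply, sum_apply]
  calc |∑ r, (x r • G r) z| ≤ ∑ r, |x r| * |G r z| := by
        simpa [abs_mul] using Finset.abs_sum_le_sum_abs (fun r => (x r • G r) z) Finset.univ
    _ ≤ lpNorm (p / (p - 1)) x * (∑ r, |G r z| ^ p) ^ (1 / p) := by
        simpa [_root_.lpNorm] using Real.inner_le_Lp_mul_Lq Finset.univ (fun r => |x r|)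
          (fun r => |G r z|) hpq
    _ ≤ 1 * B ^ (1 / p) := by
        gcongr
        exact hB z fun k => abs_le_one_of_linfNorm_le_one (hz k)
    _ = B ^ (1 / p) := one_mul _

end OperatorNorm

section DyadicForm

variable {m n : ℕ} (p : ℝ) (y : (Fin m → Fin n) → ℝ)

/-- The row of the `(m + 1)`-linear form indexed by the dyadic cube `Q`: the chaos
`∑ᵢ yᵢ ∏ₖ r_{iₖ+1}` frozen on `Q`, scaled by `|Q|^{1/p}`. -/
noncomputable def dyadicRow (Q : Fin m → Fin (2 ^ n)) :
    MultilinearMap ℝ (fun _ : Fin m => Fin n → ℝ) ℝ :=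
  (((2 : ℝ) ^ n)⁻¹ ^ m) ^ (1 / p) •
    (chaosForm y).compLinearMap fun k => LinearMap.mulLeft ℝ (dyadicSign (Q k))

noncomputable def dyadicForm :
    (Fin ((2 ^ n) ^ m) → ℝ) →ₗ[ℝ] MultilinearMap ℝ (fun _ : Fin m => Fin n → ℝ) ℝ :=
  Fintype.linearCombination ℝ fun r => dyadicRow p y (finFunctionFinEquiv.symm r)

variable {p}

theorem abs_dyadicRow_rpow (hp : 0 < p) (Q : Fin m → Fin (2 ^ n)) (z : Fin m → Fin n → ℝ) :
    |dyadicRow p y Q z| ^ p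
      = ((2 : ℝ) ^ n)⁻¹ ^ m * |chaosForm y fun k => dyadicSign (Q k) * z k| ^ p := by
  rw [dyadicRow, smul_apply, smul_eq_mul, abs_mul,
    Real.mul_rpow (abs_nonneg _) (abs_nonneg _), abs_of_nonneg (by positivity),
    ← Real.rpow_mul (by positivity), one_div_mul_cancel hp.ne', Real.rpow_one]
  rfl

theorem sum_abs_dyadicForm_single_rpow (hp : 0 < p) (i : Fin m → Fin n) :
    ∑ r, |dyadicForm p y (Pi.single r 1) (fun k => Pi.single (i k) 1)| ^ p = |y i| ^ p := by
  have habs : ∀ Q : Fin m → Fin (2 ^ n), |∏ k, dyadicSign (Q k) (i k)| = 1 := fun Q => by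
    simp [Finset.abs_prod, dyadicSign]
  simp only [dyadicForm, Fintype.linearCombination_apply_single, one_smul,
    abs_dyadicRow_rpow y hp, chaosForm_apply_mul_single, abs_mul, habs, one_mul]
  rw [Finset.sum_const, Finset.card_univ, Fintype.card_fin, nsmul_eq_mul, ← mul_assoc]
  push_cast
  rw [← mul_pow, mul_inv_cancel₀ (by positivity), one_pow, one_mul]

theorem setIntegral_abs_rademacherChaos_rpow :
    ∫ t : Fin m → ℝ in Set.Icc 0 1,
        |∑ i : Fin m → Fin n, (∏ k, rademacher ((i k).1 + 1) (t k)) * y i| ^ p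
      = ((2 : ℝ) ^ n)⁻¹ ^ m * ∑ Q : Fin m → Fin (2 ^ n),
          |chaosForm y fun k => dyadicSign (Q k)| ^ p := by
  rw [setIntegral_Icc_eq_sum_dyadicCube fun Q t ht => ?_, Fintype.card_fin]
  rw [chaosForm_apply]
  refine congrArg (|·| ^ p) (Finset.sum_congr rfl fun i _ => ?_)
  rw [mul_comm]
  congr 1
  exact Finset.prod_congr rfl fun k _ => rademacher_eq_dyadicSign _ _ (ht k (Set.mem_univ k))

theorem multiOpNorm_dyadicForm_le (hp : 1 < p) :
    multiOpNorm (p / (p - 1)) (dyadicForm p y)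
      ≤ (∫ t : Fin m → ℝ in Set.Icc 0 1,
          |∑ i : Fin m → Fin n, (∏ k, rademacher ((i k).1 + 1) (t k)) * y i| ^ p) ^ (1 / p) := by
  rw [setIntegral_abs_rademacherChaos_rpow]
  refine multiOpNorm_linearCombination_le hp _ (by positivity) fun z hz => ?_
  rw [← finFunctionFinEquiv.sum_comp]
  simp only [Equiv.symm_apply_apply, abs_dyadicRow_rpow y (zero_lt_one.trans hp), ← Finset.mul_sum]
  exact mul_le_mul_of_nonneg_left ((chaosForm y).sum_dyadicSign_abs_rpow_le hp.le hz)
    (by positivity)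

end DyadicForm

theorem multilinear_mixed_littlewood_implies_multiple_khintchine_general
    (p : ℝ) (hp1 : 1 < p) (m : ℕ) (D : ℝ) (hD : 0 ≤ D)
    (h : ∀ (N n : ℕ)
        (A : (Fin N → ℝ) →ₗ[ℝ] MultilinearMap ℝ (fun _ : Fin m => (Fin n → ℝ)) ℝ),
      (∑ i : Fin m → Fin n, (∑ i₁ : Fin N,
          |A (Pi.single i₁ 1) (fun k => Pi.single (i k) 1)| ^ p) ^ ((2 : ℝ) / p))
            ^ ((1 : ℝ) / 2)
        ≤ D * multiOpNorm (p / (p - 1)) A) :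
    ∀ (n : ℕ) (y : (Fin m → Fin n) → ℝ),
      (∑ i : Fin m → Fin n, |y i| ^ (2 : ℝ)) ^ ((1 : ℝ) / 2)
        ≤ D * (∫ t : Fin m → ℝ in Set.Icc 0 1,
            |∑ i : Fin m → Fin n,
              (∏ k, rademacher ((i k).1 + 1) (t k)) * y i| ^ p) ^ (1 / p) := by
  intro n y
  have hp0 : 0 < p := zero_lt_one.trans hp1
  have hrows : ∀ i : Fin m → Fin n,
      (∑ r, |dyadicForm p y (Pi.single r 1) (fun k => Pi.single (i k) 1)| ^ p) ^ ((2 : ℝ) / p)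
        = |y i| ^ (2 : ℝ) := fun i => by
    rw [sum_abs_dyadicForm_single_rpow y hp0, ← Real.rpow_mul (abs_nonneg _),
      mul_div_cancel₀ _ hp0.ne']
  calc (∑ i : Fin m → Fin n, |y i| ^ (2 : ℝ)) ^ ((1 : ℝ) / 2)
      = (∑ i : Fin m → Fin n, (∑ r, |dyadicForm p y (Pi.single r 1)
          (fun k => Pi.single (i k) 1)| ^ p) ^ ((2 : ℝ) / p)) ^ ((1 : ℝ) / 2) := by
        simp only [hrows]
    _ ≤ D * multiOpNorm (p / (p - 1)) (dyadicForm p y) := h _ n _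
    _ ≤ _ := mul_le_mul_of_nonneg_left (multiOpNorm_dyadicForm_le y hp1) hD

/-- Theorem `multibom` implies the multiple Khintchine inequality (case `1 < p ≤ 2`),
with the same constant. -/
theorem multilinear_mixed_littlewood_implies_multiple_khintchine
    (p : ℝ) (hp1 : 1 < p) (hp2 : p ≤ 2) (m : ℕ) (hm : 1 ≤ m) (D : ℝ) (hD : 0 ≤ D)
    (h : ∀ (N n : ℕ)
        (A : (Fin N → ℝ) →ₗ[ℝ] MultilinearMap ℝ (fun _ : Fin m => (Fin n → ℝ)) ℝ),
      (∑ i : Fin m → Fin n, (∑ i₁ : Fin N,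
          |A (Pi.single i₁ 1) (fun k => Pi.single (i k) 1)| ^ p) ^ ((2 : ℝ) / p))
            ^ ((1 : ℝ) / 2)
        ≤ D * multiOpNorm (p / (p - 1)) A) :
    ∀ (n : ℕ) (y : (Fin m → Fin n) → ℝ),
      (∑ i : Fin m → Fin n, |y i| ^ (2 : ℝ)) ^ ((1 : ℝ) / 2)
        ≤ D * (∫ t : Fin m → ℝ in Set.Icc 0 1,
            |∑ i : Fin m → Fin n,
              (∏ k, rademacher ((i k).1 + 1) (t k)) * y i| ^ p) ^ (1 / p) :=
  multilinear_mixed_littlewood_implies_multiple_khintchine_general p hp1 m D hD h
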